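/- The Fourier coefficient P̂(1) of the polynomial P(e^{2πit}) = (2/(m+2))|Σ_{j=1}^{m+1} sin(jπ/(m+2)) e^{2πijt}|² equals cos(π/(m+2)), for every integer m ≥ 1. -/

import Mathlib

/-- The Fejér-type nonnegative trigonometric polynomial used in the Riesz-product
construction, as a function of `t ∈ ℝ` (period 1). -/
noncomputable def P (m : ℕ) (t : ℝ) : ℝ :=
  (2 / ((m : ℝ) + 2)) * ‖∑ j ∈ Finset.Icc 1 (m + 1),
    (Real.sin (j * Real.pi / (m + 2)) : ℂ) * Complex.exp (2 * Real.pi * Complex.I * j * t)‖ ^ 2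

/-- The `p`-th Fourier coefficient of `P m`. -/
noncomputable def Pcoef (m : ℕ) (p : ℤ) : ℂ :=
  ∫ t in (0:ℝ)..1, (P m t : ℂ) * Complex.exp (-(2 * Real.pi * Complex.I * p * t))

lemma key (θ u : ℝ) : 4 * Real.sin θ * (Real.sin (u + θ) * Real.sin u) =
    Real.sin (θ + θ) - Real.sin ((u + θ) + (u + θ)) + Real.sin (u + u) := by
  simp only [Real.sin_add, Real.cos_add]
  linear_combination (2*Real.sin θ*Real.cos θ) * Real.sin_sq_add_cos_sq u +
    (2*Real.sin u*Real.cos u) * Real.sin_sq_add_cos_sq θ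

lemma key' (θ : ℝ) (i : ℕ) :
    4 * Real.sin θ * (Real.sin ((↑(1+i) + 1) * θ) * Real.sin ((↑(1+i) : ℝ) * θ)) =
    Real.sin (θ + θ) - (Real.sin ((2*(↑(i+1):ℝ)+2)*θ) - Real.sin ((2*(i:ℝ)+2)*θ)) := by
  have h := key θ (((i:ℝ)+1)*θ)
  push_cast
  rw [show ((1:ℝ)+(i:ℝ)+1)*θ = ((i:ℝ)+1)*θ + θ by ring,
    show ((1:ℝ)+(i:ℝ))*θ = ((i:ℝ)+1)*θ by ring,
    show (2*((i:ℝ)+1)+2)*θ = (((i:ℝ)+1)*θ+θ)+(((i:ℝ)+1)*θ+θ) by ring,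
    show (2*(i:ℝ)+2)*θ = ((i:ℝ)+1)*θ + ((i:ℝ)+1)*θ by ring]
  linarith [h]

lemma sumlem (m : ℕ) (θ : ℝ) (h : Real.sin ((2*(m:ℝ)+2) * θ) = - Real.sin (2*θ))
    (hs : Real.sin θ ≠ 0) :
    ∑ k ∈ Finset.Icc 1 m, Real.sin (((k:ℝ)+1)*θ) * Real.sin ((k:ℝ)*θ)
      = ((m:ℝ)+2)/2 * Real.cos θ := by
  have h4 : (4 : ℝ) * Real.sin θ ≠ 0 := by simp [hs]
  apply mul_left_cancel₀ h4
  rw [Finset.mul_sum, ← Finset.Ico_add_one_right_eq_Icc, Finset.sum_Ico_eq_sum_range]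
  have step : ∀ i ∈ Finset.range m, 4 * Real.sin θ *
      (Real.sin ((↑(1+i) + 1) * θ) * Real.sin ((↑(1+i) : ℝ) * θ)) =
      Real.sin (θ + θ) - (Real.sin ((2*(↑(i+1):ℝ)+2)*θ) - Real.sin ((2*(i:ℝ)+2)*θ)) :=
    fun i _ => key' θ i
  rw [show m + 1 - 1 = m from rfl]
  rw [Finset.sum_congr rfl step, Finset.sum_sub_distrib, Finset.sum_const, Finset.card_range]
  rw [Finset.sum_range_sub (fun i => Real.sin ((2*(i:ℝ)+2)*θ))]
  have h2 : Real.sin (θ + θ) = 2 * Real.sin θ * Real.cos θ := by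
    rw [← Real.sin_two_mul]; ring_nf
  rw [h2]
  simp only [Nat.cast_zero]
  rw [h, show (2*(0:ℝ)+2)*θ = 2*θ by ring, Real.sin_two_mul]
  ring

lemma int_exp (n : ℤ) : (∫ t in (0:ℝ)..1, Complex.exp (2 * Real.pi * Complex.I * n * t)) =
    if n = 0 then 1 else 0 := by
  split_ifs with h
  · simp [h]
  · have hc : (2 * (Real.pi:ℂ) * Complex.I * n) ≠ 0 := by
      simp [Complex.I_ne_zero, Real.pi_ne_zero, h]
    rw [show (fun t : ℝ => Complex.exp (2 * Real.pi * Complex.I * n * t)) = fun t : ℝ =>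
      Complex.exp ((2 * (Real.pi:ℂ) * Complex.I * n) * t) from rfl,
      integral_exp_mul_complex hc,
      show (2 * (Real.pi:ℂ) * Complex.I * n) * (1:ℝ) = n * (2*Real.pi*Complex.I) by
        push_cast; ring]
    simp [Complex.exp_int_mul_two_pi_mul_I]

lemma expand (m : ℕ) (t : ℝ) :
    (P m t : ℂ) * Complex.exp (-(2 * Real.pi * Complex.I * 1 * t)) =
    ((2 / ((m:ℝ) + 2) : ℝ) : ℂ) * ∑ k ∈ Finset.Icc 1 (m+1), ∑ j ∈ Finset.Icc 1 (m+1),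
      ((Real.sin (j * Real.pi / (m+2)) : ℂ) * (Real.sin (k * Real.pi / (m+2)) : ℂ)) *
        Complex.exp (2 * Real.pi * Complex.I * (((j:ℤ) - k - 1 : ℤ) : ℂ) * t) := by
  set S := ∑ j ∈ Finset.Icc 1 (m+1),
    (Real.sin (j * Real.pi / (m+2)) : ℂ) * Complex.exp (2 * Real.pi * Complex.I * j * t) with hS
  have hP : (P m t : ℂ) = ((2 / ((m:ℝ) + 2) : ℝ) : ℂ) * ((starRingEnd ℂ) S * S) := by
    rw [P, Complex.ofReal_mul]
    congr 1
    rw [mul_comm ((starRingEnd ℂ) S) S, Complex.mul_conj, Complex.normSq_eq_norm_sq]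
  have hconj : (starRingEnd ℂ) S = ∑ k ∈ Finset.Icc 1 (m+1),
      (Real.sin (k * Real.pi / (m+2)) : ℂ) * Complex.exp (-(2 * Real.pi * Complex.I * k * t)) := by
    rw [hS, map_sum]
    refine Finset.sum_congr rfl fun k _ => ?_
    rw [map_mul, Complex.conj_ofReal, ← Complex.exp_conj]
    congr 1
    simp only [map_mul, map_neg, Complex.conj_I, Complex.conj_ofReal, map_ofNat,
      Complex.conj_natCast]
    ring
  rw [hP, hconj, Finset.sum_mul_sum, mul_assoc, Finset.sum_mul]
  congr 1
  refine Finset.sum_congr rfl fun k _ => ?_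
  rw [Finset.sum_mul]
  refine Finset.sum_congr rfl fun j _ => ?_
  rw [show ((2:ℂ) * Real.pi * Complex.I * (((j:ℤ) - k - 1 : ℤ) : ℂ) * t)
      = (2 * Real.pi * Complex.I * j * t) + (-(2 * Real.pi * Complex.I * k * t))
        + (-(2 * Real.pi * Complex.I * 1 * t)) by push_cast; ring,
    Complex.exp_add, Complex.exp_add]
  ring

theorem stmt6 (m : ℕ) (hm : 1 ≤ m) :
    Pcoef m 1 = (Real.cos (Real.pi / (m + 2)) : ℝ) := by
  have hd : ((m:ℝ) + 2) ≠ 0 := by positivity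
  rw [Pcoef]
  simp only [Int.cast_one]
  simp only [expand m]
  -- integrate term by term
  rw [intervalIntegral.integral_const_mul]
  have h2 := intervalIntegral.integral_finset_sum (μ := MeasureTheory.volume) (a := (0:ℝ))
    (b := 1) (s := Finset.Icc 1 (m+1))
    (f := fun k (t:ℝ) => ∑ j ∈ Finset.Icc 1 (m+1),
      ((Real.sin (j * Real.pi / (m+2)) : ℂ) * (Real.sin (k * Real.pi / (m+2)) : ℂ)) *
        Complex.exp (2 * Real.pi * Complex.I * (((j:ℤ) - k - 1 : ℤ) : ℂ) * t))
    (fun k _ => (by fun_prop : Continuous fun t : ℝ => ∑ j ∈ Finset.Icc 1 (m+1),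
      ((Real.sin (j * Real.pi / (m+2)) : ℂ) * (Real.sin (k * Real.pi / (m+2)) : ℂ)) *
        Complex.exp (2 * Real.pi * Complex.I * (((j:ℤ) - k - 1 : ℤ) : ℂ) * t)).intervalIntegrable _ _)
  rw [h2]
  have h3 : ∀ k ∈ Finset.Icc 1 (m+1),
      (∫ t in (0:ℝ)..1, ∑ j ∈ Finset.Icc 1 (m+1),
        ((Real.sin (j * Real.pi / (m+2)) : ℂ) * (Real.sin (k * Real.pi / (m+2)) : ℂ)) *
          Complex.exp (2 * Real.pi * Complex.I * (((j:ℤ) - k - 1 : ℤ) : ℂ) * t))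
      = ∑ j ∈ Finset.Icc 1 (m+1),
        ((Real.sin (j * Real.pi / (m+2)) : ℂ) * (Real.sin (k * Real.pi / (m+2)) : ℂ)) *
          (if (j : ℕ) = k + 1 then 1 else 0) := by
    intro k _
    have h4 := intervalIntegral.integral_finset_sum (μ := MeasureTheory.volume) (a := (0:ℝ))
      (b := 1) (s := Finset.Icc 1 (m+1))
      (f := fun j (t:ℝ) =>
        ((Real.sin (j * Real.pi / (m+2)) : ℂ) * (Real.sin (k * Real.pi / (m+2)) : ℂ)) *
          Complex.exp (2 * Real.pi * Complex.I * (((j:ℤ) - k - 1 : ℤ) : ℂ) * t))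
      (fun j _ => (by fun_prop : Continuous fun t : ℝ =>
        ((Real.sin (j * Real.pi / (m+2)) : ℂ) * (Real.sin (k * Real.pi / (m+2)) : ℂ)) *
          Complex.exp (2 * Real.pi * Complex.I * (((j:ℤ) - k - 1 : ℤ) : ℂ) * t)).intervalIntegrable _ _)
    rw [h4]
    refine Finset.sum_congr rfl fun j _ => ?_
    rw [intervalIntegral.integral_const_mul, int_exp]
    congr 1
    by_cases h : (j:ℤ) - k - 1 = 0
    · rw [if_pos h, if_pos (by omega)]
    · rw [if_neg h, if_neg (by omega)]
  rw [Finset.sum_congr rfl h3]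
  -- collapse the double sum
  have h5 : ∀ k ∈ Finset.Icc 1 (m+1),
      (∑ j ∈ Finset.Icc 1 (m+1),
        ((Real.sin (j * Real.pi / (m+2)) : ℂ) * (Real.sin (k * Real.pi / (m+2)) : ℂ)) *
          (if (j : ℕ) = k + 1 then 1 else 0))
      = if k + 1 ∈ Finset.Icc 1 (m+1) then
          ((Real.sin ((k+1 : ℕ) * Real.pi / (m+2)) : ℂ) * (Real.sin (k * Real.pi / (m+2)) : ℂ))
        else 0 := by
    intro k _
    rw [← Finset.sum_ite_eq' (Finset.Icc 1 (m+1)) (k+1)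
      (fun j => ((Real.sin (j * Real.pi / (m+2)) : ℂ) * (Real.sin (k * Real.pi / (m+2)) : ℂ)))]
    refine Finset.sum_congr rfl fun j _ => ?_
    by_cases h : j = k + 1 <;> simp [h]
  rw [Finset.sum_congr rfl h5]
  rw [Finset.sum_Icc_succ_top (by omega : 1 ≤ m + 1)]
  rw [if_neg (by simp)]
  have h6 : ∀ k ∈ Finset.Icc 1 m,
      (if k + 1 ∈ Finset.Icc 1 (m+1) then
          ((Real.sin ((k+1 : ℕ) * Real.pi / (m+2)) : ℂ) * (Real.sin (k * Real.pi / (m+2)) : ℂ))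
        else 0)
      = ((Real.sin ((k+1 : ℕ) * Real.pi / (m+2)) : ℂ) * (Real.sin (k * Real.pi / (m+2)) : ℂ)) := by
    intro k hk
    rw [if_pos]
    simp only [Finset.mem_Icc] at hk ⊢
    omega
  rw [Finset.sum_congr rfl h6, add_zero]
  -- now pass to the real trigonometric identity
  have hθlt : Real.pi / ((m:ℝ) + 2) < Real.pi :=
    div_lt_self Real.pi_pos (by have := (Nat.cast_nonneg m : (0:ℝ) ≤ m); linarith)
  have hs : Real.sin (Real.pi / ((m:ℝ)+2)) ≠ 0 :=
    ne_of_gt (Real.sin_pos_of_pos_of_lt_pi (by positivity) hθlt)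
  have hper : Real.sin ((2*(m:ℝ)+2) * (Real.pi / ((m:ℝ)+2)))
      = - Real.sin (2 * (Real.pi / ((m:ℝ)+2))) := by
    rw [show (2*(m:ℝ)+2) * (Real.pi / ((m:ℝ)+2))
        = -(2 * (Real.pi / ((m:ℝ)+2))) + 2*Real.pi by field_simp; ring,
      Real.sin_add_two_pi, Real.sin_neg]
  have hreal : (2/((m:ℝ)+2)) * ∑ k ∈ Finset.Icc 1 m,
      Real.sin ((k+1 : ℕ) * Real.pi / ((m:ℝ)+2)) * Real.sin (k * Real.pi / ((m:ℝ)+2))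
      = Real.cos (Real.pi / ((m:ℝ)+2)) := by
    have hc : ∀ k ∈ Finset.Icc 1 m,
        Real.sin ((k+1 : ℕ) * Real.pi / ((m:ℝ)+2)) * Real.sin (k * Real.pi / ((m:ℝ)+2))
        = Real.sin (((k:ℝ)+1)*(Real.pi / ((m:ℝ)+2))) * Real.sin ((k:ℝ)*(Real.pi / ((m:ℝ)+2))) := by
      intro k _
      rw [show ((k+1 : ℕ) : ℝ) * Real.pi / ((m:ℝ)+2) = ((k:ℝ)+1)*(Real.pi / ((m:ℝ)+2)) by
        push_cast; ring,
        show ((k:ℕ) : ℝ) * Real.pi / ((m:ℝ)+2) = (k:ℝ)*(Real.pi / ((m:ℝ)+2)) by ring]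
    rw [Finset.sum_congr rfl hc, sumlem m _ hper hs]
    field_simp
  exact_mod_cast congrArg (Complex.ofReal) hreal
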